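/- Let β > 0, M ≥ 2, and let ξ_1, …, ξ_M ∈ ℝ^d be memory patterns with m = max_{ν} ‖ξ_ν‖. Let 𝓜 ⊆ {1, …, M} be a support set of size k and let μ ∈ 𝓜. Then for every query x ∈ ℝ^d, the one-step retrieval error is exponentially suppressed by the separation Δ_μ: ‖T_Sparse(x) − ξ_μ‖ ≤ m (M + k − 2) exp(−β (Δ_μ − 2 m ‖x − ξ_μ‖)), where Δ_μ = min_{ν≠μ} (⟨ξ_μ, ξ_μ⟩ − ⟨ξ_μ, ξ_ν⟩). -/

import Mathlib

/-!
Let `p` be the softmax weights of the scores `β⟪x, ξ ν⟫`. Since the partition function dominates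
the `μ`-th term, `p ν ≤ exp (β (⟪x, ξ ν⟫ - ⟪x, ξ μ⟫))`, and expanding around `x = ξ μ` with
Cauchy–Schwarz bounds the exponent by `-β (Δ - 2 m ‖x - ξ μ‖)`; call this bound `ε`.
Writing `T x - ξ μ = ∑_{ν ∈ 𝓜} p ν (ξ ν - ξ μ) - (∑_{ν ∉ 𝓜} p ν) ξ μ`, the first sum has
`k - 1` nonzero terms of norm at most `2 m ε` and the second has `M - k` weights at most `ε`,
which gives `m (M + k - 2) ε`.
-/

open scoped RealInnerProductSpace
open Finset

section Softmax

variable {ι : Type*} [Fintype ι]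

noncomputable def softmax (s : ι → ℝ) (i : ι) : ℝ :=
  Real.exp (s i) / ∑ j, Real.exp (s j)

theorem softmax_nonneg (s : ι → ℝ) (i : ι) : 0 ≤ softmax s i :=
  div_nonneg (Real.exp_pos _).le (sum_nonneg fun _ _ => (Real.exp_pos _).le)

theorem sum_softmax [Nonempty ι] (s : ι → ℝ) : ∑ i, softmax s i = 1 := by
  have hZ : 0 < ∑ j, Real.exp (s j) := sum_pos (fun _ _ => Real.exp_pos _) univ_nonempty
  simp only [softmax, ← sum_div, div_self hZ.ne']

theorem softmax_le_exp_sub (s : ι → ℝ) (i j : ι) : softmax s i ≤ Real.exp (s i - s j) := by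
  rw [Real.exp_sub]
  exact div_le_div_of_nonneg_left (Real.exp_pos _).le (Real.exp_pos _)
    (single_le_sum (f := fun l => Real.exp (s l)) (fun l _ => (Real.exp_pos _).le) (mem_univ j))

end Softmax

section WeightedSum

theorem sum_smul_sub_eq {ι E : Type*} [AddCommGroup E] [Module ℝ E] (p : ι → ℝ) (s : Finset ι)
    (ξ : ι → E) (j : ι) :
    ∑ i ∈ s, p i • ξ i - ξ j = ∑ i ∈ s, p i • (ξ i - ξ j) - (1 - ∑ i ∈ s, p i) • ξ j := by
  simp only [smul_sub, sum_sub_distrib, ← sum_smul, sub_smul, one_smul]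
  abel

variable {ι E : Type*} [DecidableEq ι] [NormedAddCommGroup E] [NormedSpace ℝ E]
  {p : ι → ℝ} {s : Finset ι} {j : ι} {ε : ℝ}

theorem norm_sum_smul_sub_le (hp : ∀ i, 0 ≤ p i) (hj : j ∈ s) (hε : ∀ i ≠ j, p i ≤ ε)
    {ξ : ι → E} {D : ℝ} (hD : ∀ i ∈ s, ‖ξ i - ξ j‖ ≤ D) :
    ‖∑ i ∈ s, p i • (ξ i - ξ j)‖ ≤ (#s - 1) * (ε * D) := by
  have hD0 : 0 ≤ D := by simpa using hD j hj
  calc ‖∑ i ∈ s, p i • (ξ i - ξ j)‖ ≤ ∑ i ∈ s, p i * ‖ξ i - ξ j‖ := by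
        refine (norm_sum_le _ _).trans_eq (sum_congr rfl fun i _ => ?_)
        rw [norm_smul, Real.norm_of_nonneg (hp i)]
    _ = ∑ i ∈ s.erase j, p i * ‖ξ i - ξ j‖ := by
        rw [← sum_erase_add s _ hj, sub_self, norm_zero, mul_zero, add_zero]
    _ ≤ ∑ i ∈ s.erase j, ε * D := by
        refine sum_le_sum fun i hi => ?_
        calc p i * ‖ξ i - ξ j‖ ≤ p i * D :=
              mul_le_mul_of_nonneg_left (hD i (mem_of_mem_erase hi)) (hp i)
          _ ≤ ε * D := mul_le_mul_of_nonneg_right (hε i (ne_of_mem_erase hi)) hD0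
    _ = (#s - 1) * (ε * D) := by
        rw [sum_const, card_erase_of_mem hj, nsmul_eq_mul,
          Nat.cast_pred (card_pos.mpr ⟨j, hj⟩)]

theorem one_sub_sum_eq_sum_compl [Fintype ι] (hp1 : ∑ i, p i = 1) (s : Finset ι) :
    1 - ∑ i ∈ s, p i = ∑ i ∈ sᶜ, p i := by
  rw [← hp1, ← sum_add_sum_compl s p, add_sub_cancel_left]

theorem one_sub_sum_le [Fintype ι] (hp1 : ∑ i, p i = 1) (hj : j ∈ s) (hε : ∀ i ≠ j, p i ≤ ε) :
    1 - ∑ i ∈ s, p i ≤ (Fintype.card ι - #s) * ε := by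
  calc 1 - ∑ i ∈ s, p i = ∑ i ∈ sᶜ, p i := one_sub_sum_eq_sum_compl hp1 s
    _ ≤ ∑ i ∈ sᶜ, ε :=
        sum_le_sum fun i hi => hε i fun h => mem_compl.mp hi (h ▸ hj)
    _ = (Fintype.card ι - #s) * ε := by
        rw [sum_const, card_compl, nsmul_eq_mul, Nat.cast_sub (card_le_univ s)]

theorem norm_sum_smul_sub_le_of_weight_le [Fintype ι] (hp : ∀ i, 0 ≤ p i) (hp1 : ∑ i, p i = 1)
    (hj : j ∈ s) (hε : ∀ i ≠ j, p i ≤ ε) {ξ : ι → E} {D : ℝ}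
    (hD : ∀ i ∈ s, ‖ξ i - ξ j‖ ≤ D) :
    ‖∑ i ∈ s, p i • ξ i - ξ j‖
      ≤ (#s - 1) * (ε * D) + (Fintype.card ι - #s) * ε * ‖ξ j‖ := by
  have hrest : 0 ≤ 1 - ∑ i ∈ s, p i := by
    rw [one_sub_sum_eq_sum_compl hp1 s]
    exact sum_nonneg fun i _ => hp i
  rw [sum_smul_sub_eq]
  refine (norm_sub_le _ _).trans (add_le_add (norm_sum_smul_sub_le hp hj hε hD) ?_)
  rw [norm_smul, Real.norm_of_nonneg hrest]
  exact mul_le_mul_of_nonneg_right (one_sub_sum_le hp1 hj hε) (norm_nonneg _)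

end WeightedSum

section Retrieval

variable {E : Type*} [NormedAddCommGroup E] [InnerProductSpace ℝ E]

theorem inner_sub_inner_le (x a b : E) :
    ⟪x, b⟫ - ⟪x, a⟫ ≤ ‖x - a‖ * ‖b - a‖ - (⟪a, a⟫ - ⟪a, b⟫) := by
  have hexpand : ⟪x, b⟫ - ⟪x, a⟫ = ⟪x - a, b - a⟫ - (⟪a, a⟫ - ⟪a, b⟫) := by
    simp only [inner_sub_left, inner_sub_right]
    ring
  rw [hexpand]
  exact sub_le_sub_right (real_inner_le_norm _ _) _

theorem softmax_inner_le_exp {ι : Type*} [Fintype ι] {β : ℝ} (hβ : 0 ≤ β) (x : E) (ξ : ι → E)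
    {i j : ι} {R Δ : ℝ} (hR : ‖ξ i - ξ j‖ ≤ R) (hΔ : Δ ≤ ⟪ξ j, ξ j⟫ - ⟪ξ j, ξ i⟫) :
    softmax (fun l => β * ⟪x, ξ l⟫) i ≤ Real.exp (-β * (Δ - R * ‖x - ξ j‖)) := by
  refine (softmax_le_exp_sub _ i j).trans (Real.exp_le_exp.mpr ?_)
  have hgap : ⟪x, ξ i⟫ - ⟪x, ξ j⟫ ≤ R * ‖x - ξ j‖ - Δ := by
    linarith [inner_sub_inner_le x (ξ j) (ξ i),
      mul_le_mul_of_nonneg_left hR (norm_nonneg (x - ξ j))]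
  nlinarith [mul_le_mul_of_nonneg_left hgap hβ]

end Retrieval

theorem sparse_one_step_retrieval_general
    {d M : ℕ} (β : ℝ) (hβ : 0 < β)
    (ξ : Fin M → EuclideanSpace ℝ (Fin d))
    (m : ℝ) (hm : IsGreatest (Set.range fun ν => ‖ξ ν‖) m)
    (𝓜 : Finset (Fin M)) (k : ℕ) (hk : 𝓜.card = k)
    (μ : Fin M) (hμ : μ ∈ 𝓜)
    (Δ : ℝ)
    (hΔ : IsLeast {r : ℝ | ∃ ν : Fin M, ν ≠ μ ∧ r = ⟪ξ μ, ξ μ⟫ - ⟪ξ μ, ξ ν⟫} Δ) :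
    ∀ x : EuclideanSpace ℝ (Fin d),
      ‖(∑ ν ∈ 𝓜,
          (Real.exp (β * ⟪x, ξ ν⟫) / ∑ lam : Fin M, Real.exp (β * ⟪x, ξ lam⟫)) • ξ ν)
        - ξ μ‖
        ≤ m * ((M : ℝ) + (k : ℝ) - 2)
            * Real.exp (-β * (Δ - 2 * m * ‖x - ξ μ‖)) := by
  intro x
  have : Nonempty (Fin M) := ⟨μ⟩
  set ε := Real.exp (-β * (Δ - 2 * m * ‖x - ξ μ‖))
  have hξm : ∀ ν, ‖ξ ν‖ ≤ m := fun ν => hm.2 ⟨ν, rfl⟩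
  have hdiam : ∀ ν, ‖ξ ν - ξ μ‖ ≤ 2 * m := fun ν =>
    (norm_sub_le _ _).trans (by linarith [hξm ν, hξm μ])
  have hweight : ∀ ν ≠ μ, softmax (fun l => β * ⟪x, ξ l⟫) ν ≤ ε := fun ν hν =>
    softmax_inner_le_exp hβ.le x ξ (hdiam ν) (hΔ.2 ⟨ν, hν, rfl⟩)
  have hkM : (k : ℝ) ≤ M := by exact_mod_cast hk ▸ (card_le_univ 𝓜).trans_eq (Fintype.card_fin M)
  calc _ ≤ (k - 1) * (ε * (2 * m)) + (M - k) * ε * ‖ξ μ‖ := by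
        have h := norm_sum_smul_sub_le_of_weight_le (softmax_nonneg _) (sum_softmax _) hμ hweight
          (fun ν _ => hdiam ν)
        rw [hk, Fintype.card_fin] at h
        exact h
    _ ≤ (k - 1) * (ε * (2 * m)) + (M - k) * ε * m := by
        have : 0 ≤ (M - k : ℝ) * ε := mul_nonneg (sub_nonneg.mpr hkM) (Real.exp_nonneg _)
        gcongr
        exact hξm μ
    _ = m * (M + k - 2) * ε := by ring

/-- one-step retrieval with high accuracy — the retrieval error of the
sparse-structured dynamics is exponentially suppressed by the separation `Δ_μ`. -/
theorem sparse_one_step_retrieval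
    {d M : ℕ} (hM : 2 ≤ M) (β : ℝ) (hβ : 0 < β)
    (ξ : Fin M → EuclideanSpace ℝ (Fin d))
    (m : ℝ) (hm : IsGreatest (Set.range fun ν => ‖ξ ν‖) m)
    (𝓜 : Finset (Fin M)) (k : ℕ) (hk : 𝓜.card = k)
    (μ : Fin M) (hμ : μ ∈ 𝓜)
    (Δ : ℝ)
    (hΔ : IsLeast {r : ℝ | ∃ ν : Fin M, ν ≠ μ ∧ r = ⟪ξ μ, ξ μ⟫ - ⟪ξ μ, ξ ν⟫} Δ) :
    ∀ x : EuclideanSpace ℝ (Fin d),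
      ‖(∑ ν ∈ 𝓜,
          (Real.exp (β * ⟪x, ξ ν⟫) / ∑ lam : Fin M, Real.exp (β * ⟪x, ξ lam⟫)) • ξ ν)
        - ξ μ‖
        ≤ m * ((M : ℝ) + (k : ℝ) - 2)
            * Real.exp (-β * (Δ - 2 * m * ‖x - ξ μ‖)) :=
  sparse_one_step_retrieval_general β hβ ξ m hm 𝓜 k hk μ hμ Δ hΔ
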